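/- arXiv:2401.09273 — 7 statements merged into one kernel-verified Lean document; each statement's English description precedes it below -/
import Mathlib

section
/- Let (S,Σ) and (S',Σ') be measurable spaces and R a binary relation on the disjoint sum S ⊕ S' such that R only relates elements within the same summand (R ⊆ inl(S)² ∪ inr(S')²). Then the restriction to S of the family of R-closed sets in the sum σ-algebra equals the family of (R restricted to S)-closed sets in Σ: (Σ ⊕ Σ')(R) ↾ S = Σ(R ↾ S). -/
open MeasureTheory

/-- A labelled Markov process: a family of Markov (sub-probability) kernels indexed by labels. -/
structure LMP (L : Type*) (S : Type*) [MeasurableSpace S] where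
  τ : L → S → Measure S
  prob : ∀ a s, τ a s Set.univ ≤ 1
  meas : ∀ a (B : Set S), MeasurableSet B → Measurable fun s => τ a s B

/-- A set `X` is `R`-closed if it contains every point related (in either direction)
to one of its points. -/
def RClosed {S : Type*} (R : S → S → Prop) (X : Set S) : Prop :=
  ∀ x ∈ X, ∀ s, R x s ∨ R s x → s ∈ X

/-- A pair `(A, A')` is an `R`-closed pair. -/
def RClosedPair {S S' : Type*} (R : S → S' → Prop) (A : Set S) (A' : Set S') : Prop :=
  ∀ s s', R s s' → (s ∈ A ↔ s' ∈ A')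

section LMPdefs

variable {L S S' : Type*} [MeasurableSpace S] [MeasurableSpace S']

/-- Internal state bisimulation on an LMP. -/
def IsStateBisim (M : LMP L S) (R : S → S → Prop) : Prop :=
  ∀ s t, R s t → ∀ C : Set S, MeasurableSet C → RClosed R C →
    ∀ a, M.τ a s C = M.τ a t C

/-- State bisimilarity: two states are related by some state bisimulation. -/
def StateBisimilar (M : LMP L S) (s t : S) : Prop :=
  ∃ R, IsStateBisim M R ∧ R s t

/-- Zigzag morphism between LMPs. -/
def IsZigzag (M : LMP L S) (M' : LMP L S') (f : S → S') : Prop :=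
  Measurable f ∧ ∀ a s (B : Set S'), MeasurableSet B → M.τ a s (f ⁻¹' B) = M'.τ a (f s) B

/-- External (×-)bisimulation between two LMPs. -/
def IsExtBisim (M : LMP L S) (M' : LMP L S') (R : S → S' → Prop) : Prop :=
  ∀ s s', R s s' → ∀ (A : Set S) (A' : Set S'), MeasurableSet A → MeasurableSet A' →
    RClosedPair R A A' → ∀ a, M.τ a s A = M'.τ a s' A'

/-- External bisimilarity. -/
def ExtBisimilar (M : LMP L S) (M' : LMP L S') (s : S) (s' : S') : Prop :=
  ∃ R, IsExtBisim M M' R ∧ R s s'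

/-- The copy of `A ⊕ A'` inside the disjoint sum. -/
def sumSet (A : Set S) (A' : Set S') : Set (S ⊕ S') := Sum.inl '' A ∪ Sum.inr '' A'

/-- The direct sum of two LMPs. -/
noncomputable def LMP.sum (M : LMP L S) (M' : LMP L S') : LMP L (S ⊕ S') where
  τ a := Sum.elim (fun s => (M.τ a s).map Sum.inl) (fun s' => (M'.τ a s').map Sum.inr)
  prob a x := by
    cases x with
    | inl s =>
        simpa [Measure.map_apply measurable_inl MeasurableSet.univ] using M.prob a s
    | inr s' =>
        simpa [Measure.map_apply measurable_inr MeasurableSet.univ] using M'.prob a s'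
  meas a B hB := by
    have h : (fun x => Sum.elim (fun s => (M.τ a s).map Sum.inl)
          (fun s' => (M'.τ a s').map Sum.inr) x B)
        = Sum.elim (fun s => M.τ a s (Sum.inl ⁻¹' B))
            (fun s' => M'.τ a s' (Sum.inr ⁻¹' B)) := by
      funext x
      cases x with
      | inl s => simp [Measure.map_apply measurable_inl hB]
      | inr s' => simp [Measure.map_apply measurable_inr hB]
    rw [h]
    exact Measurable.sumElim (M.meas a _ (hB.preimage measurable_inl))
      (M'.meas a _ (hB.preimage measurable_inr))

end LMPdefs

namespace RClosed

variable {α β : Type*} {R : α → α → Prop}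

theorem union {X Y : Set α} (hX : RClosed R X) (hY : RClosed R Y) : RClosed R (X ∪ Y) := by
  rintro x (hx | hx) s hs
  · exact Or.inl (hX x hx s hs)
  · exact Or.inr (hY x hx s hs)

theorem preimage {X : Set α} (hX : RClosed R X) (f : β → α) :
    RClosed (fun b₁ b₂ => R (f b₁) (f b₂)) (f ⁻¹' X) :=
  fun b hb c hc => hX (f b) hb (f c) hc

end RClosed

section Sum

variable {S S' : Type*} {R : S ⊕ S' → S ⊕ S' → Prop}

theorem rClosed_range_inr (hR : ∀ s s', ¬R (.inl s) (.inr s') ∧ ¬R (.inr s') (.inl s)) :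
    RClosed R (Set.range Sum.inr) := by
  rintro _ ⟨u, rfl⟩ (s | s) hs
  · exact (hs.elim (hR s u).2 (hR s u).1).elim
  · exact ⟨s, rfl⟩

theorem RClosed.image_inl (hR : ∀ s s', ¬R (.inl s) (.inr s') ∧ ¬R (.inr s') (.inl s))
    {A : Set S} (hA : RClosed (fun s₁ s₂ => R (Sum.inl s₁) (Sum.inl s₂)) A) :
    RClosed R (Sum.inl '' A) := by
  rintro _ ⟨u, hu, rfl⟩ (t | t) ht
  · exact ⟨t, hA u hu t ht, rfl⟩
  · exact (ht.elim (hR u t).1 (hR u t).2).elim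

end Sum

/-- If a relation on a sum only relates elements within the same summand, then
(Σ ⊕ Σ')(R) ↾ S = Σ(R ↾ S). -/
theorem stmt2 {S S' : Type*} [MeasurableSpace S] [MeasurableSpace S']
    (R : S ⊕ S' → S ⊕ S' → Prop)
    (hR : ∀ x y, R x y → (∃ s t : S, x = Sum.inl s ∧ y = Sum.inl t) ∨
      (∃ s t : S', x = Sum.inr s ∧ y = Sum.inr t)) :
    {A : Set S | ∃ Q : Set (S ⊕ S'), MeasurableSet Q ∧ RClosed R Q ∧ A = Sum.inl ⁻¹' Q}
      = {A : Set S | MeasurableSet A ∧ RClosed (fun s₁ s₂ => R (Sum.inl s₁) (Sum.inl s₂)) A} := by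
  ext A
  constructor
  · rintro ⟨Q, hQ, hQR, rfl⟩
    exact ⟨hQ.preimage measurable_inl, hQR.preimage Sum.inl⟩
  · rintro ⟨hA, hAR⟩
    have hsep : ∀ s s', ¬R (.inl s) (.inr s') ∧ ¬R (.inr s') (.inl s) := fun s s' =>
      ⟨fun h => by rcases hR _ _ h with ⟨_, _, -, ⟨⟩⟩ | ⟨_, _, ⟨⟩, -⟩,
       fun h => by rcases hR _ _ h with ⟨_, _, ⟨⟩, -⟩ | ⟨_, _, -, ⟨⟩⟩⟩
    -- Everything in the `S'` summand may be thrown in: it is closed and invisible to `Sum.inl ⁻¹'`.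
    refine ⟨Sum.inl '' A ∪ Set.range Sum.inr,
      (measurableSet_inl_image.mpr hA).union measurableSet_range_inr,
      (hAR.image_inl hsep).union (rClosed_range_inr hsep), ?_⟩
    simp [Set.preimage_image_eq _ Sum.inl_injective]
end

section
/- For any LMP 𝕊, state bisimilarity on the direct sum 𝕊 ⊕ 𝕊 equals the complete lifting of state bisimilarity on 𝕊: ∼ₛ,𝕊⊕𝕊 = (∼ₛ,𝕊)⁺. -/
open MeasureTheory

/-- The complete lifting of a relation R on S to the sum S ⊕ S. -/
def plusLift {S : Type*} (R : S → S → Prop) : S ⊕ S → S ⊕ S → Prop :=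
  fun u v => ∃ s t, R s t ∧ (u = Sum.inl s ∨ u = Sum.inr s) ∧ (v = Sum.inl t ∨ v = Sum.inr t)

/-!
The codiagonal `Sum.elim id id : 𝕊 ⊕ 𝕊 → 𝕊` is a zigzag morphism with the measurable section
`Sum.inl`. Images of state bisimulations along a zigzag morphism are state bisimulations, and
so is the pullback of a reflexive one along a zigzag morphism with a measurable section: a
measurable set closed under the pulled-back relation is the preimage of its pullback along the
section. Hence `u ∼ v` in `𝕊 ⊕ 𝕊` exactly when the underlying states are bisimilar in `𝕊`,
which is the complete lifting.
-/

section StateBisim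

variable {L S S' : Type*} [MeasurableSpace S] [MeasurableSpace S']

theorem stateBisimilar_refl (M : LMP L S) (s : S) : StateBisimilar M s s :=
  ⟨Eq, fun _ _ h _ _ _ _ => h ▸ rfl, rfl⟩

theorem isStateBisim_stateBisimilar (M : LMP L S) : IsStateBisim M (StateBisimilar M) := by
  rintro s t ⟨R, hR, hst⟩ C hC hclosed a
  refine hR s t hst C hC (fun x hx y hxy => hclosed x hx y ?_) a
  exact hxy.imp (fun h => ⟨R, hR, h⟩) (fun h => ⟨R, hR, h⟩)

theorem IsStateBisim.map {M : LMP L S} {M' : LMP L S'} {f : S → S'} {R : S → S → Prop}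
    (hf : IsZigzag M M' f) (hR : IsStateBisim M R) : IsStateBisim M' (Relation.Map R f f) := by
  rintro _ _ ⟨s, t, hst, rfl, rfl⟩ C hC hclosed a
  have hpre : RClosed R (f ⁻¹' C) := fun x hx y hxy =>
    hclosed (f x) hx (f y) (hxy.imp (fun h => ⟨x, y, h, rfl, rfl⟩) (fun h => ⟨y, x, h, rfl, rfl⟩))
  rw [← hf.2 a s C hC, ← hf.2 a t C hC]
  exact hR s t hst _ (hf.1 hC) hpre a

theorem IsStateBisim.comap {M : LMP L S} {M' : LMP L S'} {f : S → S'} {g : S' → S}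
    {R : S' → S' → Prop} (hf : IsZigzag M M' f) (hg : Measurable g)
    (hfg : Function.LeftInverse f g) (hR : IsStateBisim M' R) (hrefl : ∀ x, R x x) :
    IsStateBisim M (fun u v => R (f u) (f v)) := by
  intro u v huv C hC hclosed a
  have hrel : ∀ x, R (f x) (f (g (f x))) := fun x => (hfg (f x)).symm ▸ hrefl (f x)
  have hfibre : C = f ⁻¹' (g ⁻¹' C) := Set.ext fun x =>
    ⟨fun hx => hclosed x hx _ (Or.inl (hrel x)), fun hx => hclosed _ hx x (Or.inr (hrel x))⟩
  have hsec : RClosed R (g ⁻¹' C) := fun y hy z hyz =>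
    hclosed (g y) hy (g z) (by simpa only [hfg y, hfg z] using hyz)
  rw [hfibre, hf.2 a u _ (hC.preimage hg), hf.2 a v _ (hC.preimage hg)]
  exact hR _ _ huv _ (hC.preimage hg) hsec a

theorem stateBisimilar_iff_of_isZigzag {M : LMP L S} {M' : LMP L S'} {f : S → S'}
    {g : S' → S} (hf : IsZigzag M M' f) (hg : Measurable g) (hfg : Function.LeftInverse f g)
    (u v : S) : StateBisimilar M u v ↔ StateBisimilar M' (f u) (f v) := by
  constructor
  · rintro ⟨R, hR, huv⟩
    exact ⟨_, hR.map hf, u, v, huv, rfl, rfl⟩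
  · intro h
    exact ⟨_, (isStateBisim_stateBisimilar M').comap hf hg hfg (stateBisimilar_refl M'), h⟩

end StateBisim

theorem isZigzag_sumElim_id {L S : Type*} [MeasurableSpace S] (M : LMP L S) :
    IsZigzag (M.sum M) M (Sum.elim id id) := by
  refine ⟨measurable_id.sumElim measurable_id, fun a u B hB => ?_⟩
  have hB' : MeasurableSet (Sum.elim id id ⁻¹' B : Set (S ⊕ S)) :=
    hB.preimage (measurable_id.sumElim measurable_id)
  cases u with
  | inl s => exact Measure.map_apply measurable_inl hB'
  | inr s => exact Measure.map_apply measurable_inr hB'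

theorem eq_inl_or_eq_inr_iff_sumElim_id {S : Type*} (u : S ⊕ S) (s : S) :
    (u = Sum.inl s ∨ u = Sum.inr s) ↔ Sum.elim id id u = s := by
  cases u <;> simp [eq_comm]

theorem plusLift_iff {S : Type*} (R : S → S → Prop) (u v : S ⊕ S) :
    plusLift R u v ↔ R (Sum.elim id id u) (Sum.elim id id v) := by
  simp only [plusLift, eq_inl_or_eq_inr_iff_sumElim_id]
  exact ⟨fun ⟨_, _, h, hu, hv⟩ => hu ▸ hv ▸ h, fun h => ⟨_, _, h, rfl, rfl⟩⟩

/-- State bisimilarity on 𝕊 ⊕ 𝕊 is the complete lifting of state bisimilarity on 𝕊. -/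
theorem stmt6 {L S : Type*} [MeasurableSpace S] (M : LMP L S) :
    ∀ u v : S ⊕ S, StateBisimilar (M.sum M) u v ↔ plusLift (StateBisimilar M) u v := by
  intro u v
  rw [plusLift_iff]
  exact stateBisimilar_iff_of_isZigzag (isZigzag_sumElim_id M) measurable_inl
    (fun _ => rfl) u v
end

section
/- If R ⊆ S × S' is an external bisimulation between LMPs 𝕊 and 𝕊', then its lift R̂ = {(inl(s),inr(s')) | s R s'} is an internal state bisimulation on the direct sum 𝕊 ⊕ 𝕊'. Conversely, if R is an internal state bisimulation on 𝕊 ⊕ 𝕊' that only relates points in different summands (via inl and inr respectively), then its descent R_× is an external bisimulation. -/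
open MeasureTheory

namespace LMP

variable {L S S' : Type*} [MeasurableSpace S] [MeasurableSpace S']

theorem sum_τ_inl (M : LMP L S) (M' : LMP L S') (a : L) (s : S) {C : Set (S ⊕ S')}
    (hC : MeasurableSet C) : (M.sum M').τ a (Sum.inl s) C = M.τ a s (Sum.inl ⁻¹' C) :=
  Measure.map_apply measurable_inl hC

theorem sum_τ_inr (M : LMP L S) (M' : LMP L S') (a : L) (s' : S') {C : Set (S ⊕ S')}
    (hC : MeasurableSet C) : (M.sum M').τ a (Sum.inr s') C = M'.τ a s' (Sum.inr ⁻¹' C) :=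
  Measure.map_apply measurable_inr hC

end LMP

section SumSet

variable {S S' : Type*}

@[simp]
theorem preimage_inl_sumSet (A : Set S) (A' : Set S') : Sum.inl ⁻¹' sumSet A A' = A := by
  ext; simp [sumSet]

@[simp]
theorem preimage_inr_sumSet (A : Set S) (A' : Set S') : Sum.inr ⁻¹' sumSet A A' = A' := by
  ext; simp [sumSet]

theorem MeasurableSet.sumSet [MeasurableSpace S] [MeasurableSpace S'] {A : Set S} {A' : Set S'}
    (hA : MeasurableSet A) (hA' : MeasurableSet A') : MeasurableSet (sumSet A A') :=
  (measurableSet_inl_image.mpr hA).union (measurableSet_inr_image.mpr hA')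

end SumSet

section CrossRel

variable {S S' : Type*}

def crossLift (R : S → S' → Prop) : S ⊕ S' → S ⊕ S' → Prop :=
  fun u v => ∃ s s', R s s' ∧ u = Sum.inl s ∧ v = Sum.inr s'

theorem RClosed.rClosedPair_preimage {R : S → S' → Prop} {C : Set (S ⊕ S')}
    (hC : RClosed (crossLift R) C) : RClosedPair R (Sum.inl ⁻¹' C) (Sum.inr ⁻¹' C) :=
  fun s s' h =>
    ⟨fun hs => hC _ hs _ (Or.inl ⟨s, s', h, rfl, rfl⟩),
      fun hs' => hC _ hs' _ (Or.inr ⟨s, s', h, rfl, rfl⟩)⟩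

theorem RClosedPair.rClosed_sumSet {R : S ⊕ S' → S ⊕ S' → Prop}
    (hR : ∀ u v, R u v → ∃ s s', u = Sum.inl s ∧ v = Sum.inr s') {A : Set S} {A' : Set S'}
    (hAA' : RClosedPair (fun s s' => R (Sum.inl s) (Sum.inr s')) A A') :
    RClosed R (sumSet A A') := by
  intro x hx y hxy
  rcases hxy with h | h <;> obtain ⟨s, s', rfl, rfl⟩ := hR _ _ h
  · simpa [sumSet] using (hAA' s s' h).mp (by simpa [sumSet] using hx)
  · simpa [sumSet] using (hAA' s s' h).mpr (by simpa [sumSet] using hx)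

end CrossRel

section Bisim

variable {L S S' : Type*} [MeasurableSpace S] [MeasurableSpace S']

theorem IsExtBisim.isStateBisim_sum_crossLift {M : LMP L S} {M' : LMP L S'}
    {R : S → S' → Prop} (hR : IsExtBisim M M' R) : IsStateBisim (M.sum M') (crossLift R) := by
  rintro _ _ ⟨s, s', hss', rfl, rfl⟩ C hC hCR a
  rw [M.sum_τ_inl M' a s hC, M.sum_τ_inr M' a s' hC]
  exact hR s s' hss' _ _ (hC.preimage measurable_inl) (hC.preimage measurable_inr)
    hCR.rClosedPair_preimage a

theorem IsStateBisim.isExtBisim_descent {M : LMP L S} {M' : LMP L S'}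
    {R : S ⊕ S' → S ⊕ S' → Prop} (hR : IsStateBisim (M.sum M') R)
    (hcross : ∀ u v, R u v → ∃ s s', u = Sum.inl s ∧ v = Sum.inr s') :
    IsExtBisim M M' (fun s s' => R (Sum.inl s) (Sum.inr s')) := by
  intro s s' hss' A A' hA hA' hAA' a
  have hC := hA.sumSet hA'
  have h := hR _ _ hss' _ hC (hAA'.rClosed_sumSet hcross) a
  rwa [M.sum_τ_inl M' a s hC, M.sum_τ_inr M' a s' hC, preimage_inl_sumSet,
    preimage_inr_sumSet] at h

end Bisim

/-- The lift of an external bisimulation is an internal state bisimulation on the sum;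
conversely the descent of an internal bisimulation on the sum that relates only points
in different summands is an external bisimulation. -/
theorem stmt11 {L S S' : Type*} [MeasurableSpace S] [MeasurableSpace S']
    (M : LMP L S) (M' : LMP L S') :
    (∀ R : S → S' → Prop, IsExtBisim M M' R →
      IsStateBisim (M.sum M')
        (fun u v => ∃ s s', R s s' ∧ u = Sum.inl s ∧ v = Sum.inr s')) ∧
    (∀ R : S ⊕ S' → S ⊕ S' → Prop, IsStateBisim (M.sum M') R →
      (∀ u v, R u v → ∃ s s', u = Sum.inl s ∧ v = Sum.inr s') →
      IsExtBisim M M' (fun s s' => R (Sum.inl s) (Sum.inr s'))) :=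
  ⟨fun _ hR => hR.isStateBisim_sum_crossLift, fun _ hR hcross => hR.isExtBisim_descent hcross⟩
end

section
/- If f : 𝕊 → 𝕊' is a zigzag morphism between LMPs, then graph(f) = {(s, f(s)) | s ∈ S} is an external bisimulation. Conversely, if f is measurable and surjective and graph(f) is an external bisimulation, then f is a zigzag morphism. -/
open MeasureTheory

theorem rClosedPair_graph_iff {S S' : Type*} (f : S → S') (A : Set S) (A' : Set S') :
    RClosedPair (fun s s' => s' = f s) A A' ↔ A = f ⁻¹' A' := by
  refine ⟨fun h => Set.ext fun x => h x (f x) rfl, ?_⟩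
  rintro rfl s s' rfl
  rfl

section Graph

variable {L S S' : Type*} [MeasurableSpace S] [MeasurableSpace S']

theorem IsZigzag.isExtBisim_graph {M : LMP L S} {M' : LMP L S'} {f : S → S'}
    (hf : IsZigzag M M' f) : IsExtBisim M M' (fun s s' => s' = f s) := by
  rintro s s' rfl A A' - hA' hpair a
  rw [(rClosedPair_graph_iff f A A').1 hpair, hf.2 a s A' hA']

theorem IsExtBisim.isZigzag_of_graph {M : LMP L S} {M' : LMP L S'} {f : S → S'}
    (hf : Measurable f) (h : IsExtBisim M M' (fun s s' => s' = f s)) : IsZigzag M M' f :=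
  ⟨hf, fun a s B hB => h s (f s) rfl (f ⁻¹' B) B (hB.preimage hf) hB
    ((rClosedPair_graph_iff f _ B).2 rfl) a⟩

end Graph

/-- The graph of a zigzag morphism is an external bisimulation; conversely, a measurable
surjection whose graph is an external bisimulation is a zigzag morphism. -/
theorem stmt13 {L S S' : Type*} [MeasurableSpace S] [MeasurableSpace S']
    (M : LMP L S) (M' : LMP L S') (f : S → S') :
    (IsZigzag M M' f → IsExtBisim M M' (fun s s' => s' = f s)) ∧
    (Measurable f → Function.Surjective f →
      IsExtBisim M M' (fun s s' => s' = f s) → IsZigzag M M' f) :=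
  ⟨IsZigzag.isExtBisim_graph, fun hf _ h => h.isZigzag_of_graph hf⟩
end

section
/- Given a span of zigzag morphisms 𝕊 ←f– 𝕎 –g→ 𝕊' between LMPs, the relation {(f(w), g(w)) | w ∈ W} ⊆ S × S' is an external bisimulation; in particular f(w) ∼^× g(w) for every w ∈ W. -/
open MeasureTheory

theorem preimage_eq_preimage_of_rClosedPair {W S S' : Type*} {f : W → S} {g : W → S'}
    {A : Set S} {A' : Set S'} (hA : RClosedPair (fun s s' => ∃ w, s = f w ∧ s' = g w) A A') :
    f ⁻¹' A = g ⁻¹' A' :=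
  Set.ext fun w => hA (f w) (g w) ⟨w, rfl, rfl⟩

/-- Both sides of the bisimulation condition equal the mass `τ_a(w, ·)` gives to the common
preimage `f⁻¹ A = g⁻¹ A'`. -/
theorem isExtBisim_of_span {L W S S' : Type*} [MeasurableSpace W] [MeasurableSpace S]
    [MeasurableSpace S'] {MW : LMP L W} {M : LMP L S} {M' : LMP L S'} {f : W → S} {g : W → S'}
    (hf : IsZigzag MW M f) (hg : IsZigzag MW M' g) :
    IsExtBisim M M' (fun s s' => ∃ w, s = f w ∧ s' = g w) := by
  rintro _ _ ⟨w, rfl, rfl⟩ A A' hA hA' hAA' a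
  rw [← hf.2 a w A hA, preimage_eq_preimage_of_rClosedPair hAA', hg.2 a w A' hA']

/-- Given a span of zigzag morphisms 𝕊 ←f– 𝕎 –g→ 𝕊', the relation
{(f w, g w) | w ∈ W} is an external bisimulation; hence f(w) ∼^× g(w). -/
theorem stmt14 {L W S S' : Type*} [MeasurableSpace W] [MeasurableSpace S]
    [MeasurableSpace S'] (MW : LMP L W) (M : LMP L S) (M' : LMP L S')
    (f : W → S) (g : W → S') (hf : IsZigzag MW M f) (hg : IsZigzag MW M' g) :
    IsExtBisim M M' (fun s s' => ∃ w, s = f w ∧ s' = g w) ∧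
    ∀ w, ExtBisimilar M M' (f w) (g w) :=
  have hbisim := isExtBisim_of_span hf hg
  ⟨hbisim, fun w => ⟨_, hbisim, w, rfl, rfl⟩⟩
end

section
/- Let R be an ⊕-bisimulation between LMPs 𝕊 and 𝕊' such that dom(R_×) ∈ Σ and img(R_×) ∈ Σ'. Then: (a) for every s ∈ dom(R_×) and every label a, τ_a(s, S ∖ dom(R_×)) = 0; (b) the descent R_× is an external (×-)bisimulation between 𝕊 and 𝕊'. -/
open MeasureTheory

/-- An ⊕-bisimulation between 𝕊 and 𝕊'. -/
def IsOplusBisim {L S S' : Type*} [MeasurableSpace S] [MeasurableSpace S']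
    (M : LMP L S) (M' : LMP L S') (R : S ⊕ S' → S ⊕ S' → Prop) : Prop :=
  Equivalence R ∧
  ∀ s s', R (Sum.inl s) (Sum.inr s') →
    ∀ (A : Set S) (A' : Set S'), MeasurableSet A → MeasurableSet A' →
      RClosed R (sumSet A A') → ∀ a, M.τ a s A = M'.τ a s' A'

/-!
Both parts come from testing the ⊕-bisimulation on well-chosen `R`-closed sets. Since `R` is an
equivalence, the complement of `dom(R_×)` (placed on the left, with nothing on the right) is
`R`-closed, so a related pair `(s, s')` gives `τ_a(s, S ∖ dom) = τ'_a(s', ∅) = 0`; symmetrically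
`τ'_a(s', S' ∖ img) = 0`. For an `R_×`-closed pair `(A, A')`, the restriction
`(A ∩ dom) ⊕ (A' ∩ img)` is `R`-closed, and by the null complements the restriction does not
change `τ_a(s, A)` or `τ'_a(s', A')`.
-/

section SumSet

variable {S S' : Type*} {A : Set S} {A' : Set S'}

@[simp]
lemma inl_mem_sumSet {s : S} : Sum.inl s ∈ sumSet A A' ↔ s ∈ A := by
  simp [sumSet]

@[simp]
lemma inr_mem_sumSet {s' : S'} : Sum.inr s' ∈ sumSet A A' ↔ s' ∈ A' := by
  simp [sumSet]

end SumSet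

lemma RClosed.of_forall_rel {α : Type*} {R : α → α → Prop} {X : Set α} (hR : Equivalence R)
    (h : ∀ x y, R x y → x ∈ X → y ∈ X) : RClosed R X :=
  fun x hx y hxy => h x y (hxy.elim id hR.symm) hx

section OplusClosed

variable {S S' : Type*} {R : S ⊕ S' → S ⊕ S' → Prop}

lemma rClosed_sumSet_compl_dom (hR : Equivalence R) :
    RClosed R (sumSet {s : S | ∃ s', R (.inl s) (.inr s')}ᶜ (∅ : Set S')) := by
  refine RClosed.of_forall_rel hR ?_
  rintro (u | u) (w | w) huw hu <;> simp only [inl_mem_sumSet, inr_mem_sumSet,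
    Set.mem_compl_iff, Set.mem_ofPred_eq, not_exists, Set.mem_empty_iff_false] at hu ⊢
  · exact fun w' hw' => hu w' (hR.trans huw hw')
  · exact hu w huw

lemma rClosed_sumSet_compl_img (hR : Equivalence R) :
    RClosed R (sumSet (∅ : Set S) {s' : S' | ∃ s, R (.inl s) (.inr s')}ᶜ) := by
  refine RClosed.of_forall_rel hR ?_
  rintro (u | u) (w | w) huw hu <;> simp only [inl_mem_sumSet, inr_mem_sumSet,
    Set.mem_compl_iff, Set.mem_ofPred_eq, not_exists, Set.mem_empty_iff_false] at hu ⊢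
  · exact hu w (hR.symm huw)
  · exact fun w' hw' => hu w' (hR.trans hw' (hR.symm huw))

lemma rClosed_sumSet_inter_dom_img (hR : Equivalence R) {A : Set S} {A' : Set S'}
    (hA : RClosedPair (fun s s' => R (.inl s) (.inr s')) A A') :
    RClosed R (sumSet (A ∩ {s | ∃ s', R (.inl s) (.inr s')})
      (A' ∩ {s' | ∃ s, R (.inl s) (.inr s')})) := by
  refine RClosed.of_forall_rel hR ?_
  rintro (u | u) (w | w) huw hu <;> simp only [inl_mem_sumSet, inr_mem_sumSet,
    Set.mem_inter_iff, Set.mem_ofPred_eq] at hu ⊢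
  · obtain ⟨huA, v, huv⟩ := hu
    have hwv : R (.inl w) (.inr v) := hR.trans (hR.symm huw) huv
    exact ⟨(hA w v hwv).2 ((hA u v huv).1 huA), v, hwv⟩
  · exact ⟨(hA u w huw).1 hu.1, u, huw⟩
  · exact ⟨(hA w u (hR.symm huw)).2 hu.1, u, hR.symm huw⟩
  · obtain ⟨huA, v, hvu⟩ := hu
    have hvw : R (.inl v) (.inr w) := hR.trans hvu huw
    exact ⟨(hA v w hvw).1 ((hA v u hvu).2 huA), v, hvw⟩

end OplusClosed

namespace IsOplusBisim

variable {L S S' : Type*} [MeasurableSpace S] [MeasurableSpace S']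
  {M : LMP L S} {M' : LMP L S'} {R : S ⊕ S' → S ⊕ S' → Prop}

lemma measure_compl_dom_eq_zero (hR : IsOplusBisim M M' R)
    (hdom : MeasurableSet {s : S | ∃ s', R (.inl s) (.inr s')}) {s : S} {s' : S'}
    (h : R (.inl s) (.inr s')) (a : L) :
    M.τ a s {s : S | ∃ s', R (.inl s) (.inr s')}ᶜ = 0 := by
  simpa using hR.2 s s' h _ ∅ hdom.compl .empty (rClosed_sumSet_compl_dom hR.1) a

lemma measure_compl_img_eq_zero (hR : IsOplusBisim M M' R)
    (himg : MeasurableSet {s' : S' | ∃ s, R (.inl s) (.inr s')}) {s : S} {s' : S'}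
    (h : R (.inl s) (.inr s')) (a : L) :
    M'.τ a s' {s' : S' | ∃ s, R (.inl s) (.inr s')}ᶜ = 0 := by
  simpa using (hR.2 s s' h ∅ _ .empty himg.compl (rClosed_sumSet_compl_img hR.1) a).symm

lemma isExtBisim (hR : IsOplusBisim M M' R)
    (hdom : MeasurableSet {s : S | ∃ s', R (.inl s) (.inr s')})
    (himg : MeasurableSet {s' : S' | ∃ s, R (.inl s) (.inr s')}) :
    IsExtBisim M M' (fun s s' => R (.inl s) (.inr s')) := by
  intro s s' h A A' hA hA' hAA' a
  calc M.τ a s A = M.τ a s (A ∩ {s | ∃ s', R (.inl s) (.inr s')}) :=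
        (measure_inter_conull (hR.measure_compl_dom_eq_zero hdom h a)).symm
    _ = M'.τ a s' (A' ∩ {s' | ∃ s, R (.inl s) (.inr s')}) :=
        hR.2 s s' h _ _ (hA.inter hdom) (hA'.inter himg)
          (rClosed_sumSet_inter_dom_img hR.1 hAA') a
    _ = M'.τ a s' A' := measure_inter_conull (hR.measure_compl_img_eq_zero himg h a)

end IsOplusBisim

/-- If R is an ⊕-bisimulation with measurable dom(R_×) and img(R_×), then
(a) transitions from dom(R_×) give zero mass to its complement, and
(b) the descent R_× is an external bisimulation. -/
theorem stmt18 {L S S' : Type*} [MeasurableSpace S] [MeasurableSpace S']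
    (M : LMP L S) (M' : LMP L S') (R : S ⊕ S' → S ⊕ S' → Prop)
    (hR : IsOplusBisim M M' R)
    (hdom : MeasurableSet {s : S | ∃ s', R (Sum.inl s) (Sum.inr s')})
    (himg : MeasurableSet {s' : S' | ∃ s, R (Sum.inl s) (Sum.inr s')}) :
    (∀ s, (∃ s', R (Sum.inl s) (Sum.inr s')) →
      ∀ a, M.τ a s ({s : S | ∃ s', R (Sum.inl s) (Sum.inr s')}ᶜ) = 0) ∧
    IsExtBisim M M' (fun s s' => R (Sum.inl s) (Sum.inr s')) :=
  ⟨fun _ ⟨_, h⟩ a => hR.measure_compl_dom_eq_zero hdom h a, hR.isExtBisim hdom himg⟩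
end

section
/- The union of an arbitrary family of external state bisimulations between two NLMPs is an external state bisimulation; likewise for external hit bisimulations. Moreover, every external state bisimulation between two NLMPs is an external hit bisimulation. -/
open MeasureTheory

/-- The space of subprobability measures on `S`, with the σ-algebra generated by
the evaluation maps on measurable sets. -/
abbrev SubProb (S : Type*) [MeasurableSpace S] := {μ : Measure S // μ Set.univ ≤ 1}

/-- A nondeterministic labelled Markov process: each transition function returns a
measurable set of subprobability measures, and is measurable with respect to the
hit σ-algebra (preimages of the generating hit sets are measurable). -/
structure NLMP (L : Type*) (S : Type*) [MeasurableSpace S] where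
  T : L → S → Set (SubProb S)
  val_meas : ∀ a s, MeasurableSet (T a s)
  hit_meas : ∀ a (D : Set (SubProb S)), MeasurableSet D →
    MeasurableSet {s | (T a s ∩ D).Nonempty}

/-- The lifting of a relation `R ⊆ S × S'` to subprobability measures:
μ and μ' agree on every R-closed measurable pair. -/
def MeasLift {S S' : Type*} [MeasurableSpace S] [MeasurableSpace S']
    (R : S → S' → Prop) (μ : SubProb S) (μ' : SubProb S') : Prop :=
  ∀ (Q : Set S) (Q' : Set S'), MeasurableSet Q → MeasurableSet Q' →
    RClosedPair R Q Q' → μ.1 Q = μ'.1 Q'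

/-- External state bisimulation between NLMPs. -/
def IsExtStateBisimN {L S S' : Type*} [MeasurableSpace S] [MeasurableSpace S']
    (N : NLMP L S) (N' : NLMP L S') (R : S → S' → Prop) : Prop :=
  ∀ s s', R s s' → ∀ a,
    (∀ μ ∈ N.T a s, ∃ μ' ∈ N'.T a s', MeasLift R μ μ') ∧
    (∀ μ' ∈ N'.T a s', ∃ μ ∈ N.T a s, MeasLift R μ μ')

/-- Δ^×(Σ^×(R)): the smallest bi-σ-algebra (closed under coordinatewise complements and
countable unions) containing the pairs (Δ^{<q}(Q), Δ^{<q}(Q')) for q ∈ ℚ and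
R-closed measurable pairs (Q, Q'). -/
inductive DeltaTimes {S S' : Type*} [MeasurableSpace S] [MeasurableSpace S']
    (R : S → S' → Prop) : Set (SubProb S) → Set (SubProb S') → Prop
  | basic (q : ℚ) (Q : Set S) (Q' : Set S') (hQ : MeasurableSet Q)
      (hQ' : MeasurableSet Q') (h : RClosedPair R Q Q') :
      DeltaTimes R {μ : SubProb S | μ.1 Q < ENNReal.ofReal (q : ℝ)}
        {μ : SubProb S' | μ.1 Q' < ENNReal.ofReal (q : ℝ)}
  | compl (Θ : Set (SubProb S)) (Θ' : Set (SubProb S')) :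
      DeltaTimes R Θ Θ' → DeltaTimes R Θᶜ Θ'ᶜ
  | iUnion (f : ℕ → Set (SubProb S)) (f' : ℕ → Set (SubProb S')) :
      (∀ n, DeltaTimes R (f n) (f' n)) → DeltaTimes R (⋃ n, f n) (⋃ n, f' n)

/-- External hit bisimulation between NLMPs. -/
def IsExtHitBisimN {L S S' : Type*} [MeasurableSpace S] [MeasurableSpace S']
    (N : NLMP L S) (N' : NLMP L S') (R : S → S' → Prop) : Prop :=
  ∀ s s', R s s' → ∀ a (Θ : Set (SubProb S)) (Θ' : Set (SubProb S')),
    DeltaTimes R Θ Θ' → ((N.T a s ∩ Θ).Nonempty ↔ (N'.T a s' ∩ Θ').Nonempty)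

/-! Enlarging `R` leaves fewer `R`-closed pairs, so the lifting `R̄` grows while
`Δ^×(Σ^×(R))` shrinks; hence the witnesses for a member of a family serve for its union.
Every pair in `Δ^×(Σ^×(R))` is `R̄`-closed, so the `R̄`-matching of measures provided by a
state bisimulation carries a transition hitting `Θ` to one hitting `Θ'`. -/

section Bisimulation

variable {L S S' : Type*} [MeasurableSpace S] [MeasurableSpace S']

theorem MeasLift.mono {R R' : S → S' → Prop} (hRR' : ∀ s s', R s s' → R' s s')
    {μ : SubProb S} {μ' : SubProb S'} (h : MeasLift R μ μ') : MeasLift R' μ μ' :=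
  fun Q Q' hQ hQ' hclosed => h Q Q' hQ hQ' fun s s' hs => hclosed s s' (hRR' s s' hs)

theorem DeltaTimes.anti {R R' : S → S' → Prop} (hRR' : ∀ s s', R s s' → R' s s')
    {Θ : Set (SubProb S)} {Θ' : Set (SubProb S')} (h : DeltaTimes R' Θ Θ') :
    DeltaTimes R Θ Θ' := by
  induction h with
  | basic q Q Q' hQ hQ' hclosed =>
    exact .basic q Q Q' hQ hQ' fun s s' hs => hclosed s s' (hRR' s s' hs)
  | compl _ _ _ ih => exact .compl _ _ ih
  | iUnion f f' _ ih => exact .iUnion f f' ih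

theorem DeltaTimes.mem_iff_of_measLift {R : S → S' → Prop}
    {Θ : Set (SubProb S)} {Θ' : Set (SubProb S')} (h : DeltaTimes R Θ Θ')
    {μ : SubProb S} {μ' : SubProb S'} (hμ : MeasLift R μ μ') : μ ∈ Θ ↔ μ' ∈ Θ' := by
  induction h with
  | basic q Q Q' hQ hQ' hclosed => simp only [Set.mem_ofPred_eq, hμ Q Q' hQ hQ' hclosed]
  | compl _ _ _ ih => exact ih.not
  | iUnion _ _ _ ih => simpa only [Set.mem_iUnion] using exists_congr ih

theorem isExtStateBisimN_sUnion {N : NLMP L S} {N' : NLMP L S'} {F : Set (S → S' → Prop)}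
    (hF : ∀ R ∈ F, IsExtStateBisimN N N' R) :
    IsExtStateBisimN N N' fun s s' => ∃ R ∈ F, R s s' := by
  rintro s s' ⟨R, hRF, hR⟩ a
  have hsub : ∀ u u', R u u' → ∃ R ∈ F, R u u' := fun u u' h => ⟨R, hRF, h⟩
  obtain ⟨forth, back⟩ := hF R hRF s s' hR a
  refine ⟨fun μ hμ => ?_, fun μ' hμ' => ?_⟩
  · obtain ⟨μ', hμ', hlift⟩ := forth μ hμ
    exact ⟨μ', hμ', hlift.mono hsub⟩
  · obtain ⟨μ, hμ, hlift⟩ := back μ' hμ'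
    exact ⟨μ, hμ, hlift.mono hsub⟩

theorem isExtHitBisimN_sUnion {N : NLMP L S} {N' : NLMP L S'} {F : Set (S → S' → Prop)}
    (hF : ∀ R ∈ F, IsExtHitBisimN N N' R) :
    IsExtHitBisimN N N' fun s s' => ∃ R ∈ F, R s s' := by
  rintro s s' ⟨R, hRF, hR⟩ a Θ Θ' hΘ
  exact hF R hRF s s' hR a Θ Θ' (hΘ.anti fun u u' h => ⟨R, hRF, h⟩)

theorem IsExtStateBisimN.isExtHitBisimN {N : NLMP L S} {N' : NLMP L S'} {R : S → S' → Prop}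
    (hR : IsExtStateBisimN N N' R) : IsExtHitBisimN N N' R := by
  intro s s' hs a Θ Θ' hΘ
  obtain ⟨forth, back⟩ := hR s s' hs a
  constructor
  · rintro ⟨μ, hμT, hμΘ⟩
    obtain ⟨μ', hμ'T, hlift⟩ := forth μ hμT
    exact ⟨μ', hμ'T, (hΘ.mem_iff_of_measLift hlift).mp hμΘ⟩
  · rintro ⟨μ', hμ'T, hμ'Θ⟩
    obtain ⟨μ, hμT, hlift⟩ := back μ' hμ'T
    exact ⟨μ, hμT, (hΘ.mem_iff_of_measLift hlift).mpr hμ'Θ⟩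

end Bisimulation

/-- Unions of external state (resp. hit) bisimulations between NLMPs are again external
state (resp. hit) bisimulations, and every external state bisimulation is an external
hit bisimulation. -/
theorem stmt19 {L S S' : Type*} [MeasurableSpace S] [MeasurableSpace S']
    (N : NLMP L S) (N' : NLMP L S') :
    (∀ F : Set (S → S' → Prop), (∀ R ∈ F, IsExtStateBisimN N N' R) →
      IsExtStateBisimN N N' (fun s s' => ∃ R ∈ F, R s s')) ∧
    (∀ F : Set (S → S' → Prop), (∀ R ∈ F, IsExtHitBisimN N N' R) →
      IsExtHitBisimN N N' (fun s s' => ∃ R ∈ F, R s s')) ∧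
    (∀ R : S → S' → Prop, IsExtStateBisimN N N' R → IsExtHitBisimN N N' R) :=
  ⟨fun _ => isExtStateBisimN_sUnion, fun _ => isExtHitBisimN_sUnion,
    fun _ => IsExtStateBisimN.isExtHitBisimN⟩
end
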